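/- Let S be a commutative ring, R = S[x], I ⊆ R an ideal, and 𝔮 ⊆ S a prime ideal with K_{k-1}(I) ⊆ 𝔮 and K_k(I) ⊄ 𝔮. Then there exists f ∈ I with deg_x(f) = k and LC_x(f) ∉ 𝔮, and moreover every g ∈ I with deg_x(g) < k has all its S-coefficients in 𝔮. -/
import Mathlib


/-- The `k`-th partial elimination ideal of an ideal `I ⊆ S[x]`, as a subset of `S`. -/
def pelim {S : Type*} [CommRing S] (I : Ideal (Polynomial S)) (k : ℕ) : Set S :=
  {f₀ | ∃ g : Polynomial S, g.degree < (k : ℕ) ∧ Polynomial.X ^ k * Polynomial.C f₀ + g ∈ I}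

/-- If `𝔮 ⊆ S` is a prime ideal with `K_{k-1}(I) ⊆ 𝔮` and `K_k(I) ⊄ 𝔮`, then there exists
`f ∈ I` with `deg_x(f) = k` and `LC_x(f) ∉ 𝔮`, and every `g ∈ I` with `deg_x(g) < k` has
all its `S`-coefficients in `𝔮`. -/
theorem pelim_prime_jump {S : Type*} [CommRing S]
    (I : Ideal (Polynomial S)) (q : Ideal S) (hq : q.IsPrime) (k : ℕ) (hk : 1 ≤ k)
    (h1 : pelim I (k - 1) ⊆ (q : Set S)) (h2 : ¬ pelim I k ⊆ (q : Set S)) :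
    (∃ f ∈ I, f.natDegree = k ∧ f.leadingCoeff ∉ q) ∧
      ∀ g ∈ I, g.degree < (k : ℕ) → ∀ i : ℕ, g.coeff i ∈ q := by
  obtain ⟨f₀, hf₀mem, hf₀q⟩ := Set.not_subset.mp h2
  obtain ⟨g, hgdeg, hgI⟩ := hf₀mem
  set f : Polynomial S := Polynomial.X ^ k * Polynomial.C f₀ + g with hf
  have hf₀ne : f₀ ≠ 0 := fun h => hf₀q (h ▸ q.zero_mem)
  have hmon : Polynomial.X ^ k * Polynomial.C f₀ = Polynomial.monomial k f₀ := by
    rw [mul_comm, Polynomial.C_mul_X_pow_eq_monomial]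
  have hcoef : ∀ m, k ≤ m → f.coeff m = if m = k then f₀ else 0 := by
    intro m hm
    have hgm : g.coeff m = 0 := Polynomial.coeff_eq_zero_of_degree_lt
      (lt_of_lt_of_le hgdeg (by exact_mod_cast hm))
    simp [hf, hmon, Polynomial.coeff_monomial, hgm, eq_comm]
  have hcoefk : f.coeff k = f₀ := by simpa using hcoef k le_rfl
  have hdegle : f.degree ≤ (k : ℕ) := by
    rw [Polynomial.degree_le_iff_coeff_zero]
    intro m hm
    have hm' : k < m := by exact_mod_cast hm
    rw [hcoef m hm'.le, if_neg hm'.ne']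
  have hdeg : f.degree = (k : ℕ) :=
    le_antisymm hdegle (Polynomial.le_degree_of_ne_zero (hcoefk ▸ hf₀ne))
  have hnat : f.natDegree = k := Polynomial.natDegree_eq_of_degree_eq_some hdeg
  have hlc : f.leadingCoeff = f₀ := by
    rw [Polynomial.leadingCoeff, hnat, hcoefk]
  -- Top-coefficient lemma
  have top : ∀ p ∈ I, p.degree < (k : ℕ) → p.coeff (k - 1) ∈ q := by
    intro p hp hpd
    apply h1
    refine ⟨p - Polynomial.monomial (k - 1) (p.coeff (k - 1)), ?_, ?_⟩
    · rw [Polynomial.degree_lt_iff_coeff_zero]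
      intro n hn
      have hn' : k - 1 ≤ n := by exact_mod_cast hn
      rcases eq_or_lt_of_le hn' with h | h
      · simp [Polynomial.coeff_monomial, ← h]
      · have hkn : k ≤ n := by omega
        have hpn : p.coeff n = 0 := Polynomial.coeff_eq_zero_of_degree_lt
          (lt_of_lt_of_le hpd (by exact_mod_cast hkn))
        rw [Polynomial.coeff_sub, hpn, Polynomial.coeff_monomial, if_neg (by omega : ¬ (k - 1 = n))]; ring
    · rw [mul_comm, Polynomial.C_mul_X_pow_eq_monomial]
      simpa using hp
  -- Main induction
  have key : ∀ m : ℕ, ∀ p ∈ I, p.degree < (k : ℕ) → p.coeff (k - 1 - m) ∈ q := by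
    intro m
    induction m with
    | zero => simpa using top
    | succ m ih =>
      intro p hp hpd
      by_cases hm : k - 1 ≤ m
      · have : k - 1 - (m + 1) = k - 1 - m := by omega
        rw [this]; exact ih p hp hpd
      · set c := p.coeff (k - 1) with hc
        have hcq : c ∈ q := top p hp hpd
        set h : Polynomial S :=
          Polynomial.C f₀ * (Polynomial.X * p) - Polynomial.C c * f with hh
        have hhI : h ∈ I :=
          I.sub_mem (I.mul_mem_left _ (I.mul_mem_left _ hp)) (I.mul_mem_left _ hgI)
        have hhc : ∀ n, h.coeff n = f₀ * (Polynomial.X * p).coeff n - c * f.coeff n := by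
          intro n; simp [hh, Polynomial.coeff_sub, Polynomial.coeff_C_mul]
        have hXp : ∀ n, 1 ≤ n → (Polynomial.X * p).coeff n = p.coeff (n - 1) := by
          intro n hn
          obtain ⟨n, rfl⟩ := Nat.exists_eq_add_of_le hn
          simp [add_comm, Polynomial.coeff_X_mul p n]
        have hhdeg : h.degree < (k : ℕ) := by
          rw [Polynomial.degree_lt_iff_coeff_zero]
          intro n hn
          have hn' : k ≤ n := by exact_mod_cast hn
          rw [hhc, hXp n (le_trans hk hn')]
          rcases eq_or_lt_of_le hn' with hkn | hkn
          · rw [← hkn, hcoef k le_rfl, if_pos rfl, ← hc]; ring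
          · have h1 : p.coeff (n - 1) = 0 := Polynomial.coeff_eq_zero_of_degree_lt
              (lt_of_lt_of_le hpd (by exact_mod_cast (by omega : k ≤ n - 1)))
            rw [h1, hcoef n hn', if_neg hkn.ne']; ring
        have := ih h hhI hhdeg
        rw [hhc, hXp (k - 1 - m) (by omega)] at this
        have h2 : f₀ * p.coeff (k - 1 - m - 1) ∈ q := by
          have := q.add_mem this (q.mul_mem_right (f.coeff (k - 1 - m)) hcq)
          simpa using this
        have h3 : k - 1 - m - 1 = k - 1 - (m + 1) := by omega
        rw [h3] at h2
        rcases hq.mem_or_mem h2 with h | h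
        · exact absurd h hf₀q
        · exact h
  refine ⟨⟨f, hgI, hnat, by rw [hlc]; exact hf₀q⟩, ?_⟩
  intro p hp hpd i
  by_cases hi : i < k
  · have := key (k - 1 - i) p hp hpd
    rwa [(by omega : k - 1 - (k - 1 - i) = i)] at this
  · have : p.coeff i = 0 := Polynomial.coeff_eq_zero_of_degree_lt
      (lt_of_lt_of_le hpd (by exact_mod_cast (by omega : k ≤ i)))
    rw [this]; exact q.zero_mem
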